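/- Let X be a real Hilbert space, let A and B be closed linear subspaces of X, and let v ∈ B. Define the sequence (x_k) by x_0 = v and x_{k+1} = x_k − P_B x_k + P_A(P_B x_k + (v − x_k)/2). Then for every k ≥ 1, x_k is the alternating sum of the 2k−1 terms P_A v, P_B P_A v, P_A P_B P_A v, ..., P_A(P_B P_A)^{k−1} v with alternating signs starting with +, i.e., x_k = P_A v − P_B P_A v + P_A P_B P_A v − ... + P_A (P_B P_A)^{k−1} v = Σ_{j=0}^{k−1} P_A(P_B P_A)^j v − Σ_{j=0}^{k−2} (P_B P_A)^{j+1} v. -/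

import Mathlib

/-- For the best-approximation Douglas–Rachford iteration
`x_{k+1} = x_k - P_B x_k + P_A(P_B x_k + (v - x_k)/2)` for closed linear
subspaces `A`, `B` with starting point `v ∈ B`, one has for every `k ≥ 1`
`x_k = P_A v - P_B P_A v + P_A P_B P_A v - ⋯ + P_A (P_B P_A)^{k-1} v`, the
alternating sum of the `2k-1` terms `c_0 = P_A v`, `c_{j+1} = P_B c_j` (`j` even),
`c_{j+1} = P_A c_j` (`j` odd), with signs `(-1)^j`. -/
theorem stmt_13 {X : Type*} [NormedAddCommGroup X] [InnerProductSpace ℝ X] [CompleteSpace X]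
    (A B : Submodule ℝ X) [CompleteSpace A] [CompleteSpace B]
    (v : X) (hv : v ∈ B) (x : ℕ → X) (hx0 : x 0 = v)
    (hx : ∀ k, x (k + 1) = x k - (Submodule.orthogonalProjectionOnto B (x k) : X) +
      (Submodule.orthogonalProjectionOnto A
        ((Submodule.orthogonalProjectionOnto B (x k) : X) + (2 : ℝ)⁻¹ • (v - x k)) : X))
    (c : ℕ → X) (hc0 : c 0 = (Submodule.orthogonalProjectionOnto A v : X))
    (hc : ∀ j, c (j + 1) =
      if j % 2 = 0 then (Submodule.orthogonalProjectionOnto B (c j) : X)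
      else (Submodule.orthogonalProjectionOnto A (c j) : X)) :
    ∀ k : ℕ, 1 ≤ k →
      x k = ∑ j ∈ Finset.range (2 * k - 1), ((-1 : ℝ) ^ j) • c j := by
  have paA : ∀ y : X, ((Submodule.orthogonalProjectionOnto A y : X)) ∈ A := fun y => (Submodule.orthogonalProjectionOnto A y).2
  have pbB : ∀ y : X, ((Submodule.orthogonalProjectionOnto B y : X)) ∈ B := fun y => (Submodule.orthogonalProjectionOnto B y).2
  have paSelf : ∀ y ∈ A, (Submodule.orthogonalProjectionOnto A y : X) = y :=
    fun y hy => Submodule.starProjection_eq_self_iff.mpr hy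
  have pbSelf : ∀ y ∈ B, (Submodule.orthogonalProjectionOnto B y : X) = y :=
    fun y hy => Submodule.starProjection_eq_self_iff.mpr hy
  have cB : ∀ i, c (2 * i + 1) = (Submodule.orthogonalProjectionOnto B (c (2 * i)) : X) := by
    intro i; rw [hc, if_pos (by omega)]
  have cA : ∀ i, c (2 * i + 2) = (Submodule.orthogonalProjectionOnto A (c (2 * i + 1)) : X) := by
    intro i; rw [hc, if_neg (by omega)]
  have cmemA : ∀ i, c (2 * i) ∈ A := by
    intro i
    cases i with
    | zero => simpa [hc0] using paA v
    | succ n => rw [show 2 * (n + 1) = 2 * n + 2 by ring, cA n]; exact paA _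
  have cmemB : ∀ i, c (2 * i + 1) ∈ B := by
    intro i; rw [cB i]; exact pbB _
  have pbEven : ∀ i, (Submodule.orthogonalProjectionOnto B (c (2 * i)) : X) = c (2 * i + 1) :=
    fun i => (cB i).symm
  have pbOdd : ∀ i, (Submodule.orthogonalProjectionOnto B (c (2 * i + 1)) : X) = c (2 * i + 1) :=
    fun i => pbSelf _ (cmemB i)
  have paEven : ∀ i, (Submodule.orthogonalProjectionOnto A (c (2 * i)) : X) = c (2 * i) :=
    fun i => paSelf _ (cmemA i)
  have paOdd : ∀ i, (Submodule.orthogonalProjectionOnto A (c (2 * i + 1)) : X) = c (2 * i + 2) :=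
    fun i => (cA i).symm
  have key : ∀ n : ℕ,
      x (n + 1) = ∑ j ∈ Finset.range (2 * n + 1), ((-1 : ℝ) ^ j) • c j ∧
      (Submodule.orthogonalProjectionOnto B (∑ j ∈ Finset.range (2 * n + 1), ((-1 : ℝ) ^ j) • c j) : X)
        = c (2 * n + 1) ∧
      (Submodule.orthogonalProjectionOnto A (∑ j ∈ Finset.range (2 * n + 1), ((-1 : ℝ) ^ j) • c j) : X)
        = c 0 := by
    intro n
    induction n with
    | zero =>
      have hsum : ∑ j ∈ Finset.range (2 * 0 + 1), ((-1 : ℝ) ^ j) • c j = c 0 := by simp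
      refine ⟨?_, ?_, ?_⟩
      · rw [hx 0, hx0, pbSelf v hv, hsum]
        simp [hc0]
      · rw [hsum]
        simpa using pbEven 0 -- ok
      · rw [hsum, hc0]
        exact paSelf _ (paA v)
    | succ n ih =>
      obtain ⟨ihx, ihB, ihA⟩ := ih
      set S := ∑ j ∈ Finset.range (2 * n + 1), ((-1 : ℝ) ^ j) • c j with hS
      have hsum : ∑ j ∈ Finset.range (2 * (n + 1) + 1), ((-1 : ℝ) ^ j) • c j
          = S - c (2 * n + 1) + c (2 * n + 2) := by
        rw [show 2 * (n + 1) + 1 = (2 * n + 1) + 1 + 1 by ring, Finset.sum_range_succ,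
          Finset.sum_range_succ]
        have h1 : ((-1 : ℝ)) ^ (2 * n + 1) = -1 := Odd.neg_one_pow ⟨n, by ring⟩
        have h2 : ((-1 : ℝ)) ^ (2 * n + 1 + 1) = 1 := Even.neg_one_pow ⟨n + 1, by ring⟩
        rw [h1, h2, show 2 * n + 1 + 1 = 2 * n + 2 by ring]
        simp [sub_eq_add_neg, hS]
      have hprojA : (Submodule.orthogonalProjectionOnto A
          (c (2 * n + 1) + (2 : ℝ)⁻¹ • (v - S)) : X) = c (2 * n + 2) := by
        have : (Submodule.orthogonalProjectionOnto A (c (2 * n + 1) + (2 : ℝ)⁻¹ • (v - S)) : X)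
            = (Submodule.orthogonalProjectionOnto A (c (2 * n + 1)) : X)
              + (2 : ℝ)⁻¹ • ((Submodule.orthogonalProjectionOnto A v : X)
                - (Submodule.orthogonalProjectionOnto A S : X)) := by
          simp [map_add, map_smul, map_sub]
        rw [this, paOdd n, ihA, ← hc0]
        simp
      have hxnew : x (n + 1 + 1) = S - c (2 * n + 1) + c (2 * n + 2) := by
        rw [hx (n + 1), ihx, ihB, hprojA]
      have hBnew : (Submodule.orthogonalProjectionOnto B (S - c (2 * n + 1) + c (2 * n + 2)) : X)
          = c (2 * (n + 1) + 1) := by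
        have : (Submodule.orthogonalProjectionOnto B (S - c (2 * n + 1) + c (2 * n + 2)) : X)
            = (Submodule.orthogonalProjectionOnto B S : X)
              - (Submodule.orthogonalProjectionOnto B (c (2 * n + 1)) : X)
              + (Submodule.orthogonalProjectionOnto B (c (2 * n + 2)) : X) := by
          simp [map_add, map_sub]
        rw [this, ihB, pbOdd n]
        have := pbEven (n + 1)
        rw [show 2 * (n + 1) = 2 * n + 2 by ring] at this
        rw [this, sub_self, zero_add]
        congr 1
      have hAnew : (Submodule.orthogonalProjectionOnto A (S - c (2 * n + 1) + c (2 * n + 2)) : X)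
          = c 0 := by
        have : (Submodule.orthogonalProjectionOnto A (S - c (2 * n + 1) + c (2 * n + 2)) : X)
            = (Submodule.orthogonalProjectionOnto A S : X)
              - (Submodule.orthogonalProjectionOnto A (c (2 * n + 1)) : X)
              + (Submodule.orthogonalProjectionOnto A (c (2 * n + 2)) : X) := by
          simp [map_add, map_sub]
        rw [this, ihA, paOdd n]
        have := paEven (n + 1)
        rw [show 2 * (n + 1) = 2 * n + 2 by ring] at this
        rw [this]
        abel
      exact ⟨by rw [hxnew, hsum], by rw [hsum, hBnew], by rw [hsum, hAnew]⟩
  intro k hk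
  obtain ⟨n, rfl⟩ : ∃ n, k = n + 1 := ⟨k - 1, by omega⟩
  rw [show 2 * (n + 1) - 1 = 2 * n + 1 by omega]
  exact (key n).1
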